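/- Let X be a Banach space with a C_w-quasi-greedy Markushevich basis, i.e., ‖P_Λ(x)‖ ≤ C_w‖x‖ for every x ∈ X and every greedy set Λ of x. Assume additionally the truncation estimate: for any x and finite sets A₁ ⊂ A₂ with τ ≤ |e_n^*(x)| ≤ 1 for all n ∈ A₂, one has ‖P_{A₁}(x)‖ ≤ (8C_w³/τ)‖P_{A₂}(x)‖. Then for every τ ∈ (0,1], every x ∈ X, and every τ-weak greedy set A of x (of any finite size), ‖x − P_A(x)‖ ≤ (1 + C_w + 16C_w⁴/τ)‖x‖. -/

import Mathlib

/-!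
Let `β = min_{n ∈ A} |e_n^*(x)|`, so that all coefficients of `x` off `A` are at most `β / τ`.
The part of `A` where `|e_n^*(x)| > β / τ` is then a greedy set, costing `C_w ‖x‖`. On the rest,
`D`, the coefficients lie in the band `[β, β / τ]`; rescaling by `τ / β`, the truncation estimate
bounds `P_D x` by `P_{G \ H} x`, where `G ⊇ H` are the greedy sets of coefficients `≥ β`,
resp. `> β / τ`, whence `‖P_D x‖ ≤ (8 C_w³ / τ) · 2 C_w ‖x‖`. As `G` need not be finite, this is
first done for the finitely supported vectors `y + P_A (x - y)`, `y ∈ span (e_n)`, which share the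
coefficients of `x` on `A` and approximate `x`.
-/

open Finset

noncomputable section

variable {X : Type*} [NormedAddCommGroup X] [NormedSpace ℝ X]

def coordProj (e : ℕ → X) (f : ℕ → X →L[ℝ] ℝ) (A : Finset ℕ) : X →L[ℝ] X :=
  ∑ n ∈ A, (f n).smulRight (e n)

def IsGreedySet (f : ℕ → X →L[ℝ] ℝ) (x : X) (Λ : Finset ℕ) : Prop :=
  ∀ i ∈ Λ, ∀ j ∉ Λ, |f j x| ≤ |f i x|

def IsWeakGreedySet (f : ℕ → X →L[ℝ] ℝ) (τ : ℝ) (x : X) (A : Finset ℕ) : Prop :=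
  ∀ i ∈ A, ∀ j ∉ A, τ * |f j x| ≤ |f i x|

def IsBiorthogonal (e : ℕ → X) (f : ℕ → X →L[ℝ] ℝ) : Prop :=
  ∀ i j, f i (e j) = if i = j then (1 : ℝ) else 0

def IsQuasiGreedy (e : ℕ → X) (f : ℕ → X →L[ℝ] ℝ) (Cw : ℝ) : Prop :=
  ∀ (x : X) (Λ : Finset ℕ), IsGreedySet f x Λ → ‖coordProj e f Λ x‖ ≤ Cw * ‖x‖

def HasTruncationBound (e : ℕ → X) (f : ℕ → X →L[ℝ] ℝ) (τ K : ℝ) : Prop :=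
  ∀ (x : X) (A₁ A₂ : Finset ℕ), A₁ ⊆ A₂ →
    (∀ n ∈ A₂, τ ≤ |f n x| ∧ |f n x| ≤ 1) → ‖coordProj e f A₁ x‖ ≤ K * ‖coordProj e f A₂ x‖

variable {e : ℕ → X} {f : ℕ → X →L[ℝ] ℝ}

theorem coordProj_apply (A : Finset ℕ) (x : X) :
    coordProj e f A x = ∑ n ∈ A, f n x • e n := by
  simp [coordProj]

theorem coordProj_sdiff {G H : Finset ℕ} (h : H ⊆ G) :
    coordProj e f (G \ H) = coordProj e f G - coordProj e f H :=
  sum_sdiff_eq_sub h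

theorem apply_coordProj (hbi : IsBiorthogonal e f) (A : Finset ℕ) (x : X) (m : ℕ) :
    f m (coordProj e f A x) = if m ∈ A then f m x else 0 := by
  simp [coordProj_apply, hbi m]

theorem exists_finset_apply_eq_zero_of_mem_span (hbi : IsBiorthogonal e f)
    {y : X} (hy : y ∈ Submodule.span ℝ (Set.range e)) :
    ∃ S : Finset ℕ, ∀ n ∉ S, f n y = 0 := by
  induction hy using Submodule.span_induction with
  | mem _ h =>
    obtain ⟨i, rfl⟩ := h
    exact ⟨{i}, fun n hn => by simpa [hbi n i] using hn⟩
  | zero => exact ⟨∅, by simp⟩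
  | add _ _ _ _ hy hz =>
    obtain ⟨S, hS⟩ := hy
    obtain ⟨T, hT⟩ := hz
    exact ⟨S ∪ T, fun n hn => by
      rw [mem_union, not_or] at hn
      simp [hS n hn.1, hT n hn.2]⟩
  | smul a _ _ hy =>
    obtain ⟨S, hS⟩ := hy
    exact ⟨S, fun n hn => by simp [hS n hn]⟩

theorem isGreedySet_filter_lt {x : X} {S : Finset ℕ} {t : ℝ} (hout : ∀ j ∉ S, |f j x| ≤ t) :
    IsGreedySet f x (S.filter (t < |f · x|)) := by
  intro i hi j hj
  simp only [mem_filter, not_and, not_lt] at hi hj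
  by_cases hjS : j ∈ S
  · linarith [hj hjS]
  · linarith [hout j hjS]

theorem isGreedySet_filter_le {x : X} {S : Finset ℕ} {t : ℝ} (hout : ∀ j ∉ S, |f j x| < t) :
    IsGreedySet f x (S.filter (t ≤ |f · x|)) := by
  intro i hi j hj
  simp only [mem_filter, not_and, not_le] at hi hj
  by_cases hjS : j ∈ S
  · linarith [hj hjS]
  · linarith [hout j hjS]

theorem norm_coordProj_sdiff_le {Cw : ℝ} (hCw : IsQuasiGreedy e f Cw)
    {x : X} {G H : Finset ℕ} (hHG : H ⊆ G) (hG : IsGreedySet f x G) (hH : IsGreedySet f x H) :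
    ‖coordProj e f (G \ H) x‖ ≤ 2 * Cw * ‖x‖ := by
  rw [coordProj_sdiff hHG, sub_apply]
  calc _ ≤ ‖coordProj e f G x‖ + ‖coordProj e f H x‖ := norm_sub_le _ _
    _ ≤ Cw * ‖x‖ + Cw * ‖x‖ := add_le_add (hCw x G hG) (hCw x H hH)
    _ = 2 * Cw * ‖x‖ := by ring

theorem norm_coordProj_le_of_mem_band_of_pos {τ K β : ℝ} (hτ : 0 < τ) (hβ : 0 < β)
    (htrunc : HasTruncationBound e f τ K) {x : X} {A₁ A₂ : Finset ℕ} (h : A₁ ⊆ A₂)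
    (hband : ∀ n ∈ A₂, β ≤ |f n x| ∧ |f n x| ≤ β / τ) :
    ‖coordProj e f A₁ x‖ ≤ K * ‖coordProj e f A₂ x‖ := by
  have hc : 0 < τ / β := div_pos hτ hβ
  have key := htrunc ((τ / β) • x) A₁ A₂ h fun n hn => by
    obtain ⟨hlow, hhigh⟩ := hband n hn
    rw [map_smul, smul_eq_mul, abs_mul, abs_of_pos hc]
    constructor
    · calc τ = τ / β * β := by field_simp
        _ ≤ τ / β * |f n x| := by gcongr
    · calc τ / β * |f n x| ≤ τ / β * (β / τ) := by gcongr
        _ = 1 := by field_simp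
  rw [map_smul, map_smul, norm_smul, norm_smul, Real.norm_of_nonneg hc.le, mul_left_comm] at key
  exact le_of_mul_le_mul_left key hc

theorem norm_coordProj_le_of_mem_band_of_finite_support {Cw τ K β : ℝ}
    (hτ : 0 < τ) (hτ1 : τ ≤ 1) (hK : 0 ≤ K) (hβ : 0 < β)
    (hCw : IsQuasiGreedy e f Cw) (htrunc : HasTruncationBound e f τ K)
    {y : X} {S D : Finset ℕ} (hS : ∀ n ∉ S, f n y = 0)
    (hD : ∀ n ∈ D, β ≤ |f n y| ∧ |f n y| ≤ β / τ) :
    ‖coordProj e f D y‖ ≤ K * (2 * Cw) * ‖y‖ := by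
  set G := S.filter (β ≤ |f · y|)
  set H := S.filter (β / τ < |f · y|)
  have hββτ : β ≤ β / τ := le_div_self hβ.le hτ hτ1
  have hHG : H ⊆ G := monotone_filter_right _ fun _ _ h => hββτ.trans h.le
  have hG : IsGreedySet f y G := isGreedySet_filter_le fun j hj => by simpa [hS j hj] using hβ
  have hH : IsGreedySet f y H :=
    isGreedySet_filter_lt fun j hj => by rw [hS j hj, abs_zero]; positivity
  have hDGH : D ⊆ G \ H := by
    intro n hn
    obtain ⟨hlow, hhigh⟩ := hD n hn
    have hnS : n ∈ S := by
      by_contra h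
      rw [hS n h, abs_zero] at hlow
      linarith
    simp [G, H, hnS, hlow, hhigh]
  have hband : ∀ n ∈ G \ H, β ≤ |f n y| ∧ |f n y| ≤ β / τ := by
    intro n hn
    simp only [G, H, mem_sdiff, mem_filter, not_and, not_lt] at hn
    exact ⟨hn.1.2, hn.2 hn.1.1⟩
  calc ‖coordProj e f D y‖ ≤ K * ‖coordProj e f (G \ H) y‖ :=
        norm_coordProj_le_of_mem_band_of_pos hτ hβ htrunc hDGH hband
    _ ≤ K * (2 * Cw * ‖y‖) := by gcongr; exact norm_coordProj_sdiff_le hCw hHG hG hH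
    _ = K * (2 * Cw) * ‖y‖ := by ring

theorem norm_coordProj_le_of_mem_band
    (hbi : IsBiorthogonal e f) (hdense : Dense (Submodule.span ℝ (Set.range e) : Set X))
    {Cw τ K β : ℝ} (hτ : 0 < τ) (hτ1 : τ ≤ 1) (hCw0 : 0 ≤ Cw) (hK : 0 ≤ K)
    (hCw : IsQuasiGreedy e f Cw) (htrunc : HasTruncationBound e f τ K)
    {x : X} {A D : Finset ℕ} (hDA : D ⊆ A) (hD : ∀ n ∈ D, β ≤ |f n x| ∧ |f n x| ≤ β / τ) :
    ‖coordProj e f D x‖ ≤ K * (2 * Cw) * ‖x‖ := by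
  rcases le_or_gt β 0 with hβ | hβ
  · have hzero : coordProj e f D x = 0 := by
      rw [coordProj_apply]
      refine sum_eq_zero fun n hn => ?_
      have : |f n x| ≤ 0 := (hD n hn).2.trans (div_nonpos_of_nonpos_of_nonneg hβ hτ.le)
      simp [abs_nonpos_iff.1 this]
    rw [hzero, norm_zero]
    positivity
  let g : X → X := fun y => y + coordProj e f A (x - y)
  have hgA : ∀ y, ∀ n ∈ A, f n (g y) = f n x := fun y n hn => by
    simp [g, apply_coordProj hbi, hn]
  have hDg : ∀ y, coordProj e f D (g y) = coordProj e f D x := fun y => by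
    simp only [coordProj_apply]
    exact sum_congr rfl fun n hn => by rw [hgA y n (hDA hn)]
  have key : ∀ y, ‖coordProj e f D x‖ ≤ K * (2 * Cw) * ‖g y‖ := by
    refine hdense.induction (fun y hy => ?_) (isClosed_le continuous_const (by fun_prop))
    obtain ⟨S, hS⟩ := exists_finset_apply_eq_zero_of_mem_span hbi hy
    rw [← hDg y]
    refine norm_coordProj_le_of_mem_band_of_finite_support (S := S ∪ A) hτ hτ1 hK hβ hCw htrunc
      (fun n hn => ?_) (fun n hn => hgA y n (hDA hn) ▸ hD n hn)
    rw [mem_union, not_or] at hn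
    simp [g, apply_coordProj hbi, hn.2, hS n hn.1]
  simpa [g] using key x

theorem norm_coordProj_le_of_isWeakGreedySet
    (hbi : IsBiorthogonal e f) (hdense : Dense (Submodule.span ℝ (Set.range e) : Set X))
    {Cw τ K : ℝ} (hτ : 0 < τ) (hτ1 : τ ≤ 1) (hCw0 : 0 ≤ Cw) (hK : 0 ≤ K)
    (hCw : IsQuasiGreedy e f Cw) (htrunc : HasTruncationBound e f τ K)
    {x : X} {A : Finset ℕ} (hA : IsWeakGreedySet f τ x A) :
    ‖coordProj e f A x‖ ≤ (Cw + K * (2 * Cw)) * ‖x‖ := by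
  rcases A.eq_empty_or_nonempty with rfl | hAne
  · simp only [coordProj, sum_empty, zero_apply, norm_zero]
    positivity
  obtain ⟨i₀, hi₀A, hi₀⟩ := A.exists_min_image (|f · x|) hAne
  set β := |f i₀ x|
  have hout : ∀ j ∉ A, |f j x| ≤ β / τ := fun j hj => (le_div_iff₀' hτ).2 (hA i₀ hi₀A j hj)
  have hsplit : coordProj e f A x = coordProj e f (A.filter (β / τ < |f · x|)) x
      + coordProj e f (A.filter fun n => ¬ β / τ < |f n x|) x := by
    simp only [coordProj_apply]
    exact (sum_filter_add_sum_filter_not _ _ _).symm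
  have hband : ∀ n ∈ A.filter fun n => ¬ β / τ < |f n x|, β ≤ |f n x| ∧ |f n x| ≤ β / τ := by
    intro n hn
    rw [mem_filter, not_lt] at hn
    exact ⟨hi₀ n hn.1, hn.2⟩
  calc ‖coordProj e f A x‖
      ≤ ‖coordProj e f (A.filter (β / τ < |f · x|)) x‖
        + ‖coordProj e f (A.filter fun n => ¬ β / τ < |f n x|) x‖ := hsplit ▸ norm_add_le _ _
    _ ≤ Cw * ‖x‖ + K * (2 * Cw) * ‖x‖ := add_le_add (hCw x _ (isGreedySet_filter_lt hout))
        (norm_coordProj_le_of_mem_band hbi hdense hτ hτ1 hCw0 hK hCw htrunc (filter_subset _ _)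
          hband)
    _ = (Cw + K * (2 * Cw)) * ‖x‖ := by ring

end

theorem stmt_17_general
    {X : Type*} [NormedAddCommGroup X] [NormedSpace ℝ X]
    (e : ℕ → X) (f : ℕ → X →L[ℝ] ℝ)
    (hbi : ∀ i j, f i (e j) = if i = j then (1 : ℝ) else 0)
    (hdense : Dense (Submodule.span ℝ (Set.range e) : Set X))
    (Cw : ℝ) (hCw1 : 1 ≤ Cw)
    (hCw : ∀ (x : X) (Λ : Finset ℕ),
      (∀ i ∈ Λ, ∀ j ∉ Λ, |f j x| ≤ |f i x|) →
      ‖∑ n ∈ Λ, f n x • e n‖ ≤ Cw * ‖x‖)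
    (τ : ℝ) (hτ : 0 < τ) (hτ1 : τ ≤ 1)
    (htrunc : ∀ (x : X) (A₁ A₂ : Finset ℕ), A₁ ⊆ A₂ →
      (∀ n ∈ A₂, τ ≤ |f n x| ∧ |f n x| ≤ 1) →
      ‖∑ n ∈ A₁, f n x • e n‖ ≤ (8 * Cw ^ 3 / τ) * ‖∑ n ∈ A₂, f n x • e n‖) :
    ∀ (x : X) (A : Finset ℕ),
      (∀ i ∈ A, ∀ j ∉ A, τ * |f j x| ≤ |f i x|) →
      ‖x - ∑ n ∈ A, f n x • e n‖ ≤ (1 + Cw + 16 * Cw ^ 4 / τ) * ‖x‖ := by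
  intro x A hA
  have hCw0 : 0 ≤ Cw := zero_le_one.trans hCw1
  have hPA := norm_coordProj_le_of_isWeakGreedySet (K := 8 * Cw ^ 3 / τ) hbi hdense hτ hτ1 hCw0
    (by positivity)
    (fun x Λ h => by rw [coordProj_apply]; exact hCw x Λ h)
    (fun x A₁ A₂ h hband => by simp only [coordProj_apply]; exact htrunc x A₁ A₂ h hband) hA
  rw [← coordProj_apply]
  calc ‖x - coordProj e f A x‖ ≤ ‖x‖ + ‖coordProj e f A x‖ := norm_sub_le _ _
    _ ≤ ‖x‖ + (Cw + 8 * Cw ^ 3 / τ * (2 * Cw)) * ‖x‖ := by gcongr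
    _ = (1 + Cw + 16 * Cw ^ 4 / τ) * ‖x‖ := by ring

/-- Theorem 6.1 (Konyagin–Temlyakov, improved): a `C_w`-quasi-greedy basis
satisfying the truncation estimate is `(1 + C_w + 16C_w⁴/τ, τ)`-quasi-greedy. -/
theorem stmt_17
    {X : Type*} [NormedAddCommGroup X] [NormedSpace ℝ X] [CompleteSpace X]
    (e : ℕ → X) (f : ℕ → X →L[ℝ] ℝ)
    (hbi : ∀ i j, f i (e j) = if i = j then (1 : ℝ) else 0)
    (htotal : ∀ x : X, (∀ n, f n x = 0) → x = 0)
    (hdense : Dense (Submodule.span ℝ (Set.range e) : Set X))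
    (Cw : ℝ) (hCw1 : 1 ≤ Cw)
    (hCw : ∀ (x : X) (Λ : Finset ℕ),
      (∀ i ∈ Λ, ∀ j ∉ Λ, |f j x| ≤ |f i x|) →
      ‖∑ n ∈ Λ, f n x • e n‖ ≤ Cw * ‖x‖)
    (τ : ℝ) (hτ : 0 < τ) (hτ1 : τ ≤ 1)
    (htrunc : ∀ (x : X) (A₁ A₂ : Finset ℕ), A₁ ⊆ A₂ →
      (∀ n ∈ A₂, τ ≤ |f n x| ∧ |f n x| ≤ 1) →
      ‖∑ n ∈ A₁, f n x • e n‖ ≤ (8 * Cw ^ 3 / τ) * ‖∑ n ∈ A₂, f n x • e n‖) :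
    ∀ (x : X) (A : Finset ℕ),
      (∀ i ∈ A, ∀ j ∉ A, τ * |f j x| ≤ |f i x|) →
      ‖x - ∑ n ∈ A, f n x • e n‖ ≤ (1 + Cw + 16 * Cw ^ 4 / τ) * ‖x‖ :=
  stmt_17_general e f hbi hdense Cw hCw1 hCw τ hτ hτ1 htrunc
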